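/- With notation as above, let φ and ψ be the suspension flows of f with ceiling c_f and of g with ceiling c_g, respectively, and ĥ(x,s) = (h(x), s·c_g(h(x))/c_f(x)). Then for every (x,s) ∈ M_{c_f} and t ≥ 0, ĥ(φ_t(x,s)) = ψ_{τ_{(x,s)}(t)}(ĥ(x,s)), where τ_{(x,s)}(t) = [s + t − S^f_{n}(x)] · c_g(g^{n}(h(x)))/c_f(f^{n}(x)) − s·c_g(h(x))/c_f(x) + S^g_{n}(h(x)) with n = n_{s,t}(x). -/

import Mathlib

/-! The conjugacy `h ∘ f = g ∘ h` makes the `n`-th floor over `x` correspond to the `n`-th floor over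
`h x`, and `ĥ` rescales each floor `[0, c_f(fⁿ x))` linearly onto `[0, c_g(gⁿ(h x)))`. Hence the
ψ-orbit of `ĥ(x, s)` is in its `n`-th floor at time `τ` exactly when the φ-orbit of `(x, s)` is at
time `t`, and the heights there agree after rescaling. -/

lemma mul_div_mem_Ico {K : Type*} [Field K] [LinearOrder K] [IsStrictOrderedRing K] {r c d : K}
    (hc : 0 < c) (hd : 0 < d) (hr : r ∈ Set.Ico 0 c) : r * (d / c) ∈ Set.Ico 0 d := by
  refine ⟨mul_nonneg hr.1 (div_pos hd hc).le, ?_⟩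
  rw [mul_div_assoc', div_lt_iff₀ hc, mul_comm d]
  exact mul_lt_mul_of_pos_right hr.2 hd

theorem hhat_equivalence_general {M N : Type*} (f : M → M) (g : N → N) (h : M → N)
    (hconj : ∀ x, g (h x) = h (f x))
    (cf : M → ℝ) (cg : N → ℝ) (a : ℝ) (ha : 0 < a)
    (hcf : ∀ x, a ≤ cf x) (hcg : ∀ y, a ≤ cg y)
    (Sf : ℕ → M → ℝ) (hSf : ∀ n x, Sf n x = ∑ i ∈ Finset.range n, cf (f^[i] x))
    (Sg : ℕ → N → ℝ) (hSg : ∀ n y, Sg n y = ∑ i ∈ Finset.range n, cg (g^[i] y))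
    (x : M) (s t : ℝ)
    (n : ℕ) (hn : Sf n x ≤ s + t ∧ s + t < Sf (n + 1) x)
    (τ : ℝ)
    (hτ : τ = (s + t - Sf n x) * (cg (g^[n] (h x)) / cf (f^[n] x))
        - s * (cg (h x) / cf x) + Sg n (h x)) :
    -- the ψ-lap-number of (h x, s·cg(h x)/cf x) at time τ is also n,
    (Sg n (h x) ≤ s * (cg (h x) / cf x) + τ ∧
      s * (cg (h x) / cf x) + τ < Sg (n + 1) (h x)) ∧
    -- and ĥ(φ_t(x,s)) = ψ_τ(ĥ(x,s)):
    (h (f^[n] x), (s + t - Sf n x) * (cg (h (f^[n] x)) / cf (f^[n] x)))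
      = (g^[n] (h x), s * (cg (h x) / cf x) + τ - Sg n (h x)) := by
  have hiter : h (f^[n] x) = g^[n] (h x) :=
    (Function.Semiconj.iterate_right (fun y => (hconj y).symm) n) x
  have hlap : s + t - Sf n x ∈ Set.Ico 0 (cf (f^[n] x)) := by
    rw [hSf (n + 1), Finset.sum_range_succ, ← hSf] at hn
    constructor <;> linarith [hn.1, hn.2]
  obtain ⟨hlow, hhigh⟩ :=
    mul_div_mem_Ico (ha.trans_le (hcf _)) (ha.trans_le (hcg (g^[n] (h x)))) hlap
  have hheight : s * (cg (h x) / cf x) + τ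
      = Sg n (h x) + (s + t - Sf n x) * (cg (g^[n] (h x)) / cf (f^[n] x)) := by
    rw [hτ]; ring
  rw [hheight, hiter, hSg (n + 1), Finset.sum_range_succ, ← hSg]
  exact ⟨⟨by linarith, by linarith⟩, Prod.ext rfl (by ring)⟩

theorem hhat_equivalence {M N : Type*} (f : M → M) (g : N → N) (h : M → N)
    (hconj : ∀ x, g (h x) = h (f x))
    (cf : M → ℝ) (cg : N → ℝ) (a : ℝ) (ha : 0 < a)
    (hcf : ∀ x, a ≤ cf x) (hcg : ∀ y, a ≤ cg y)
    (Sf : ℕ → M → ℝ) (hSf : ∀ n x, Sf n x = ∑ i ∈ Finset.range n, cf (f^[i] x))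
    (Sg : ℕ → N → ℝ) (hSg : ∀ n y, Sg n y = ∑ i ∈ Finset.range n, cg (g^[i] y))
    (x : M) (s t : ℝ) (hs0 : 0 ≤ s) (hs : s < cf x) (ht : 0 ≤ t)
    (n : ℕ) (hn : Sf n x ≤ s + t ∧ s + t < Sf (n + 1) x)
    (τ : ℝ)
    (hτ : τ = (s + t - Sf n x) * (cg (g^[n] (h x)) / cf (f^[n] x))
        - s * (cg (h x) / cf x) + Sg n (h x)) :
    -- the ψ-lap-number of (h x, s·cg(h x)/cf x) at time τ is also n,
    (Sg n (h x) ≤ s * (cg (h x) / cf x) + τ ∧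
      s * (cg (h x) / cf x) + τ < Sg (n + 1) (h x)) ∧
    -- and ĥ(φ_t(x,s)) = ψ_τ(ĥ(x,s)):
    (h (f^[n] x), (s + t - Sf n x) * (cg (h (f^[n] x)) / cf (f^[n] x)))
      = (g^[n] (h x), s * (cg (h x) / cf x) + τ - Sg n (h x)) :=
  hhat_equivalence_general f g h hconj cf cg a ha hcf hcg Sf hSf Sg hSg x s t n hn τ hτ
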